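/- Let n ≥ 2 and suppose x : ℝ → ((Fin n → Bool) → ℝ) satisfies the TASEP master equation with rates α, β, h. Then the function t ↦ ⟨τ_{n-1}⟩(t) = Σ_{s : s (n-1) = true} x t s is differentiable and its derivative at every t equals α * ⟨ξ_{n-1}⟩(t) − h (n-1) * ⟨τ_{n-1} ξ_{n-2}⟩(t), where ⟨ξ_{n-1}⟩(t) = Σ_{s : s (n-1) = false} x t s and ⟨τ_{n-1} ξ_{n-2}⟩(t) = Σ_{s : s (n-1) = true ∧ s (n-2) = false} x t s. -/

import Mathlib

open Finset

/-- The occupation status of site `k` in state `s` (false if `k` is not a valid site). -/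
def occ (n : ℕ) (s : Fin n → Bool) (k : ℕ) : Bool :=
  if hk : k < n then s ⟨k, hk⟩ else false

/-- Update the occupation status of site `k` in state `s` to `b`. -/
def upd (n : ℕ) (s : Fin n → Bool) (k : ℕ) (b : Bool) : Fin n → Bool :=
  if hk : k < n then Function.update s ⟨k, hk⟩ b else s

/-- `x : ℝ → (Fin n → Bool) → ℝ` satisfies the TASEP master equation with entry rate `α`,
exit rate `β` and internal rates `h`. -/
def MasterEq (n : ℕ) (α β : ℝ) (h : ℕ → ℝ) (x : ℝ → (Fin n → Bool) → ℝ) : Prop :=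
  ∀ (s : Fin n → Bool) (t : ℝ),
    HasDerivAt (fun τ => x τ s)
      ((if occ n s (n-1) = true then α * x t (upd n s (n-1) false) else 0)
        + (if occ n s 0 = false then β * x t (upd n s 0 true) else 0)
        + (∑ k ∈ Finset.Icc 1 (n-1),
            if occ n s k = false ∧ occ n s (k-1) = true
              then h k * x t (upd n (upd n s k true) (k-1) false) else 0)
        - x t s * ((if occ n s (n-1) = false then α else 0)
            + (if occ n s 0 = true then β else 0)
            + ∑ k ∈ Finset.Icc 1 (n-1),
                if occ n s k = true ∧ occ n s (k-1) = false then h k else 0)) t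

/-
Sum the master equation over the states with site `n - 1` occupied. Every transition that does
not touch site `n - 1` maps this set of states to itself, and its gain terms are a reindexing of
its loss terms along the move and its inverse, so they cancel. What survives is the entry gain,
a reindexing of the states with site `n - 1` empty, and the loss through the hop from `n - 1`
to `n - 2`; the entry loss and the gain of that hop vanish since site `n - 1` is occupied.
-/

section OccUpd

variable {n : ℕ}

lemma occ_upd_self (s : Fin n → Bool) {k : ℕ} (hk : k < n) (b : Bool) :
    occ n (upd n s k b) k = b := by
  simp [occ, upd, hk]

lemma occ_upd_of_ne (s : Fin n → Bool) {k l : ℕ} (b : Bool) (hlk : l ≠ k) :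
    occ n (upd n s k b) l = occ n s l := by
  by_cases hk : k < n <;> by_cases hl : l < n <;> simp [occ, upd, hk, hl]
  exact Function.update_of_ne
    (show (⟨l, hl⟩ : Fin n) ≠ ⟨k, hk⟩ from fun hc => hlk (by simpa [Fin.ext_iff] using hc)) b s

lemma upd_upd_eq_self (s : Fin n → Bool) (k : ℕ) (b : Bool) {c : Bool} (hc : occ n s k = c) :
    upd n (upd n s k b) k c = s := by
  by_cases hk : k < n
  · simp only [occ, dif_pos hk] at hc
    simp [upd, hk, ← hc]
  · simp [upd, hk]

lemma upd_comm (s : Fin n → Bool) {k l : ℕ} (hkl : k ≠ l) (b c : Bool) :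
    upd n (upd n s k b) l c = upd n (upd n s l c) k b := by
  by_cases hk : k < n <;> by_cases hl : l < n <;> simp [upd, hk, hl]
  exact Function.update_comm
    (show (⟨k, hk⟩ : Fin n) ≠ ⟨l, hl⟩ from fun hc => hkl (by simpa [Fin.ext_iff] using hc)) b c s

end OccUpd

theorem Finset.sum_ite_mul_comp_eq_sum_mul_ite {σ R : Type*} [CommSemiring R] {S : Finset σ}
    {p q : σ → Prop} [DecidablePred p] [DecidablePred q] (e f : σ → σ) (c : R) (y : σ → R)
    (he : ∀ s ∈ S, q s → e s ∈ S ∧ p (e s)) (hf : ∀ s ∈ S, p s → f s ∈ S ∧ q (f s))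
    (hfe : ∀ s ∈ S, q s → f (e s) = s) (hef : ∀ s ∈ S, p s → e (f s) = s) :
    ∑ s ∈ S, (if q s then c * y (e s) else 0) = ∑ s ∈ S, y s * (if p s then c else 0) := by
  calc ∑ s ∈ S, (if q s then c * y (e s) else 0)
      = ∑ s ∈ S with q s, c * y (e s) := (sum_filter _ _).symm
    _ = ∑ s ∈ S with p s, c * y s := by
      refine sum_nbij' e f ?_ ?_ ?_ ?_ fun _ _ => rfl <;> simp only [mem_filter]
      · exact fun s hs => he s hs.1 hs.2
      · exact fun s hs => hf s hs.1 hs.2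
      · exact fun s hs => hfe s hs.1 hs.2
      · exact fun s hs => hef s hs.1 hs.2
    _ = ∑ s ∈ S, y s * (if p s then c else 0) := by
      rw [sum_filter]
      simp only [mul_ite, mul_zero, mul_comm]

theorem Finset.sum_add_add_sum_sub_mul_add_add_sum {σ ι R : Type*} [CommRing R] (S : Finset σ)
    (K : Finset ι) (a b d e y : σ → R) (c f : ι → σ → R) :
    ∑ s ∈ S, (a s + b s + ∑ k ∈ K, c k s - y s * (d s + e s + ∑ k ∈ K, f k s))
      = (∑ s ∈ S, a s - ∑ s ∈ S, y s * d s) + (∑ s ∈ S, b s - ∑ s ∈ S, y s * e s)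
        + ∑ k ∈ K, (∑ s ∈ S, c k s - ∑ s ∈ S, y s * f k s) := by
  simp only [mul_add, mul_sum, sum_add_distrib, sum_sub_distrib]
  rw [sum_comm (s := S), sum_comm (s := S)]
  ring

namespace TASEP

variable {R : Type*} [CommSemiring R] {n : ℕ} (x : (Fin n → Bool) → R) (c : R)

lemma sum_entry_gain {k : ℕ} (hk : k < n) :
    ∑ s ∈ univ.filter (fun s => occ n s k = true),
        (if occ n s k = true then c * x (upd n s k false) else 0)
      = c * ∑ s ∈ univ.filter (fun s => occ n s k = false), x s := by
  rw [← sum_filter, filter_filter, mul_sum]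
  simp only [and_self]
  refine sum_nbij' (fun s => upd n s k false) (fun s => upd n s k true) ?_ ?_ ?_ ?_
    fun _ _ => rfl <;> simp only [mem_filter, mem_univ, true_and]
  · exact fun s _ => occ_upd_self s hk false
  · exact fun s _ => occ_upd_self s hk true
  · exact fun s hs => upd_upd_eq_self s k false hs
  · exact fun s hs => upd_upd_eq_self s k true hs

lemma sum_exit_gain_eq_loss (hn : 0 < n) {j : ℕ} (hj : j ≠ 0) (b : Bool) :
    ∑ s ∈ univ.filter (fun s => occ n s j = b),
        (if occ n s 0 = false then c * x (upd n s 0 true) else 0)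
      = ∑ s ∈ univ.filter (fun s => occ n s j = b),
        x s * (if occ n s 0 = true then c else 0) := by
  refine sum_ite_mul_comp_eq_sum_mul_ite _ (fun s => upd n s 0 false) c x ?_ ?_ ?_ ?_
    <;> simp only [mem_filter, mem_univ, true_and]
  · exact fun s hs _ => ⟨(occ_upd_of_ne s true hj).trans hs, occ_upd_self s hn true⟩
  · exact fun s hs _ => ⟨(occ_upd_of_ne s false hj).trans hs, occ_upd_self s hn false⟩
  · exact fun s _ hs => upd_upd_eq_self s 0 true hs
  · exact fun s _ hs => upd_upd_eq_self s 0 false hs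

lemma sum_hop_gain_eq_loss {k j : ℕ} (hk : k < n) (hk1 : 1 ≤ k) (hjk : j ≠ k) (hjk1 : j ≠ k - 1)
    (b : Bool) :
    ∑ s ∈ univ.filter (fun s => occ n s j = b),
        (if occ n s k = false ∧ occ n s (k-1) = true
          then c * x (upd n (upd n s k true) (k-1) false) else 0)
      = ∑ s ∈ univ.filter (fun s => occ n s j = b),
        x s * (if occ n s k = true ∧ occ n s (k-1) = false then c else 0) := by
  have hk1n : k - 1 < n := by omega
  have hne : k - 1 ≠ k := by omega
  refine sum_ite_mul_comp_eq_sum_mul_ite _ (fun s => upd n (upd n s k false) (k-1) true) c x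
    ?_ ?_ ?_ ?_ <;> simp only [mem_filter, mem_univ, true_and]
  · intro s hs _
    refine ⟨?_, ?_, occ_upd_self _ hk1n false⟩
    · rw [occ_upd_of_ne _ _ hjk1, occ_upd_of_ne _ _ hjk, hs]
    · rw [occ_upd_of_ne _ _ hne.symm, occ_upd_self _ hk]
  · intro s hs _
    refine ⟨?_, ?_, occ_upd_self _ hk1n true⟩
    · rw [occ_upd_of_ne _ _ hjk1, occ_upd_of_ne _ _ hjk, hs]
    · rw [occ_upd_of_ne _ _ hne.symm, occ_upd_self _ hk]
  · rintro s _ ⟨hsk, hsk1⟩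
    rw [upd_comm _ hne, upd_upd_eq_self _ _ _ hsk, upd_upd_eq_self _ _ _ hsk1]
  · rintro s _ ⟨hsk, hsk1⟩
    rw [upd_comm _ hne, upd_upd_eq_self _ _ _ hsk, upd_upd_eq_self _ _ _ hsk1]

lemma sum_hop_loss {k : ℕ} :
    ∑ s ∈ univ.filter (fun s => occ n s k = true),
        x s * (if occ n s k = true ∧ occ n s (k-1) = false then c else 0)
      = c * ∑ s ∈ univ.filter (fun s => occ n s k = true ∧ occ n s (k-1) = false), x s := by
  simp only [mul_ite, mul_zero, ← sum_filter, filter_filter, mul_sum, mul_comm]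
  congr 1
  ext s
  simp only [mem_filter, mem_univ, true_and]
  tauto

end TASEP

theorem tasep_occupation_derivative_entry
    (n : ℕ) (hn : 2 ≤ n) (α β : ℝ) (h : ℕ → ℝ)
    (x : ℝ → (Fin n → Bool) → ℝ) (hx : MasterEq n α β h x) (t : ℝ) :
    HasDerivAt
      (fun τ => ∑ s ∈ Finset.univ.filter (fun s : Fin n → Bool => occ n s (n-1) = true), x τ s)
      (α * (∑ s ∈ Finset.univ.filter
            (fun s : Fin n → Bool => occ n s (n-1) = false), x t s)
        - h (n-1) * (∑ s ∈ Finset.univ.filter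
            (fun s : Fin n → Bool => occ n s (n-1) = true ∧ occ n s (n-2) = false), x t s)) t := by
  set S := univ.filter (fun s : Fin n → Bool => occ n s (n-1) = true)
  have hS : ∀ s ∈ S, occ n s (n-1) = true := fun s hs => (mem_filter.mp hs).2
  have entry_loss : ∑ s ∈ S, x t s * (if occ n s (n-1) = false then α else 0) = 0 :=
    sum_eq_zero fun s hs => by simp [hS s hs]
  have top_hop_gain : ∑ s ∈ S, (if occ n s (n-1) = false ∧ occ n s (n-1-1) = true
      then h (n-1) * x t (upd n (upd n s (n-1) true) (n-1-1) false) else 0) = 0 :=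
    sum_eq_zero fun s hs => by simp [hS s hs]
  refine (HasDerivAt.fun_sum fun s _ => hx s t).congr_deriv ?_
  rw [sum_add_add_sum_sub_mul_add_add_sum, TASEP.sum_entry_gain _ _ (by omega), entry_loss,
    TASEP.sum_exit_gain_eq_loss _ _ (by omega) (by omega), sum_eq_single (n - 1), top_hop_gain,
    TASEP.sum_hop_loss, show n - 1 - 1 = n - 2 by omega]
  · ring
  · intro k hk hkn
    rw [mem_Icc] at hk
    rw [TASEP.sum_hop_gain_eq_loss _ _ (by omega) hk.1 (by omega) (by omega), sub_self]
  · exact fun hk => absurd (mem_Icc.mpr ⟨by omega, le_rfl⟩) hk
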